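/- One-variable elliptic Karlsson–Minton summation (Corollary 4.10 with m arbitrary): let [·] be a nonzero entire odd function satisfying the Riemann relation, δ ∈ ℂ* generic. Let α ∈ ℕ^m with |α| = M, x = (x₁,…,x_m) and u, v complex parameters, all generic. Then the terminating very-well-poised series _{2m+8}V_{2m+7}(2u; u+v, u-v, (u+δ/2+x_i+α_iδ, u+δ/2-x_i)_{1≤i≤m}, -Mδ) = ([u+δ+u]_M [u+δ-u]_M / ([u+δ+v]_M [u+δ-v]_M)) · ∏_{i=1}^m ([x_i+δ/2+v]_{α_i}[x_i+δ/2-v]_{α_i} / ([x_i+δ/2+u]_{α_i}[x_i+δ/2-u]_{α_i})). -/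

import Mathlib

open Finset

/-- Shifted factorial `[u]_k = [u][u+δ]⋯[u+(k-1)δ]`. -/
noncomputable def shiftedFac (f : ℂ → ℂ) (δ : ℂ) (u : ℂ) (k : ℕ) : ℂ :=
  ∏ r ∈ Finset.range k, f (u + (r : ℂ) * δ)

/-- The terminating very-well-poised series `_{r+5}V_{r+4}(α₀; (α_i)_{i∈ι})`,
truncated at `k = K` (equal to the full series when some `α_i = -Kδ`). -/
noncomputable def Vseries (f : ℂ → ℂ) (δ : ℂ) (K : ℕ) (α₀ : ℂ)
    {ι : Type*} [Fintype ι] (α : ι → ℂ) : ℂ :=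
  ∑ k ∈ Finset.range (K + 1),
    (f (α₀ + 2 * (k : ℂ) * δ) / f α₀) * (shiftedFac f δ α₀ k / shiftedFac f δ δ k) *
      ∏ i, shiftedFac f δ (α i) k / shiftedFac f δ (δ + α₀ - α i) k

/-- The `2m+3` upper parameters
`u+v, u-v, (u+δ/2+x_i+α_iδ, u+δ/2-x_i)_{1≤i≤m}, -Mδ` of the
`_{2m+8}V_{2m+7}` series. -/
noncomputable def KMargs (δ u v : ℂ) {m : ℕ} (x : Fin m → ℂ) (α : Fin m → ℕ)
    (M : ℕ) : Fin 2 ⊕ (Fin m × Fin 2) ⊕ Fin 1 → ℂ :=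
  Sum.elim ![u + v, u - v]
    (Sum.elim
      (fun p => if p.2 = 0 then u + δ / 2 + x p.1 + (α p.1 : ℂ) * δ
        else u + δ / 2 - x p.1)
      ![-(M : ℂ) * δ])

/-!
Write `[w ± a] = [w + a][w - a]`. By the Riemann relation, a product of `M` factors
`[w ± a_j]` is a linear combination of the `M + 1` products `E_s(w) = ∏_{l ≠ s} [w ± (u + lδ)]`,
`0 ≤ s ≤ M`, provided these nodes are in general position. Let `c_k` be the `k`-th term of
`_8V_7(2u; u + v, u - v, -Mδ)`. Since `E_s` vanishes at every node but `u + sδ`, the functional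
`P ↦ ∑_k c_k P(u + kδ)` takes the single value `c_s E_s(u + sδ)` on `E_s`, and there the shifted
factorials telescope to `K E_s(v)`. Hence `∑_k c_k P(u + kδ) = K P(v)` for every such product.
For `P(w) = ∏_i ∏_{r < α_i} [w ± (x_i + δ/2 + rδ)]` the ratio `P(u + kδ) / P(u)` is exactly
the contribution of the parameters `u + δ/2 + x_i + α_iδ, u + δ/2 - x_i` to the `k`-th term of
the series, which gives the summation. The general-position condition `[2u + jδ] ≠ 0` is removed
by continuity in `u`: the zeros of the nonzero entire function `[·]` are isolated.
-/

namespace KarlssonMinton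

variable {f : ℂ → ℂ} {δ : ℂ}

theorem shiftedFac_add (a : ℂ) (j k : ℕ) :
    shiftedFac f δ a (j + k) = shiftedFac f δ a j * shiftedFac f δ (a + j * δ) k := by
  simp only [shiftedFac, prod_range_add, Nat.cast_add, add_mul, add_assoc]

theorem shiftedFac_ne_zero_of_le {a : ℂ} {k n : ℕ} (h : shiftedFac f δ a n ≠ 0) (hk : k ≤ n) :
    shiftedFac f δ a k ≠ 0 := by
  obtain ⟨j, rfl⟩ := Nat.exists_eq_add_of_le hk
  rw [shiftedFac_add] at h
  exact left_ne_zero_of_mul h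

theorem shiftedFac_add_mul_comm (a : ℂ) (n k : ℕ) :
    shiftedFac f δ (a + n * δ) k * shiftedFac f δ a n
      = shiftedFac f δ (a + k * δ) n * shiftedFac f δ a k := by
  rw [mul_comm, ← shiftedFac_add, mul_comm, ← shiftedFac_add, Nat.add_comm]

theorem shiftedFac_reflect (hodd : f.Odd) (c : ℂ) (n : ℕ) :
    shiftedFac f δ (δ - c - n * δ) n = (-1) ^ n * shiftedFac f δ c n := by
  rw [shiftedFac, shiftedFac, ← prod_range_reflect (fun r => f (c + r * δ)), ← card_range n,
    ← prod_const, card_range, ← prod_mul_distrib]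
  refine prod_congr rfl fun r hr => ?_
  have hr' : 1 + r ≤ n := by rw [mem_range] at hr; omega
  have : δ - c - n * δ + r * δ = -(c + ((n - 1 - r : ℕ) : ℂ) * δ) := by
    rw [Nat.sub_sub, Nat.cast_sub hr']
    push_cast
    ring
  rw [this, hodd.eq, neg_one_mul]

/-- The paper's `[w ± a]`. -/
def thetaPair (f : ℂ → ℂ) (w a : ℂ) : ℂ := f (w + a) * f (w - a)

def RiemannRelation (f : ℂ → ℂ) : Prop :=
  ∀ x y a b, thetaPair f x a * thetaPair f y b - thetaPair f x b * thetaPair f y a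
    = thetaPair f x y * thetaPair f a b

theorem thetaPair_swap (hodd : f.Odd) (w a : ℂ) : thetaPair f a w = -thetaPair f w a := by
  rw [thetaPair, thetaPair, add_comm, ← neg_sub w a, hodd.eq]
  ring

theorem prod_range_thetaPair (w c : ℂ) (n : ℕ) :
    ∏ r ∈ range n, thetaPair f w (c + r * δ)
      = shiftedFac f δ (w + c) n * shiftedFac f δ (w - c - n * δ + δ) n := by
  rw [shiftedFac, shiftedFac, ← prod_range_reflect (fun j => f (w - c - n * δ + δ + j * δ)),
    ← prod_mul_distrib]
  refine prod_congr rfl fun r hr => ?_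
  have hr' : 1 + r ≤ n := by rw [mem_range] at hr; omega
  rw [thetaPair, Nat.sub_sub, Nat.cast_sub hr']
  push_cast
  ring_nf

theorem shiftedFac_add_mul_shiftedFac_sub (hodd : f.Odd) (c w : ℂ) (n : ℕ) :
    shiftedFac f δ (c + w) n * shiftedFac f δ (c - w) n
      = (-1) ^ n * ∏ r ∈ range n, thetaPair f w (c + r * δ) := by
  rw [shiftedFac, shiftedFac, ← prod_mul_distrib, ← card_range n, ← prod_const, card_range,
    ← prod_mul_distrib]
  refine prod_congr rfl fun r _ => ?_
  have : c - w + r * δ = -(w - (c + r * δ)) := by ring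
  rw [thetaPair, this, hodd.eq]
  ring_nf

noncomputable def Vterm (f : ℂ → ℂ) (δ α₀ : ℂ) {ι : Type*} [Fintype ι] (α : ι → ℂ) (k : ℕ) : ℂ :=
  (f (α₀ + 2 * (k : ℂ) * δ) / f α₀) * (shiftedFac f δ α₀ k / shiftedFac f δ δ k) *
    ∏ i, shiftedFac f δ (α i) k / shiftedFac f δ (δ + α₀ - α i) k

theorem Vseries_eq_sum_Vterm (K : ℕ) (α₀ : ℂ) {ι : Type*} [Fintype ι] (α : ι → ℂ) :
    Vseries f δ K α₀ α = ∑ k ∈ range (K + 1), Vterm f δ α₀ α k := rfl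

section Interpolation

variable {ι : Type*} [DecidableEq ι]

theorem prod_thetaPair_mem_span (hR : RiemannRelation f) {N : Finset ι} {b : ι → ℂ}
    (hb : ∀ p ∈ N, ∀ q ∈ N, p ≠ q → thetaPair f (b p) (b q) ≠ 0)
    (A : Multiset ℂ) {S : Finset ι} (hS : S ⊆ N) (hcard : Multiset.card A + #S + 1 = #N) :
    (fun w => (A.map (thetaPair f w)).prod * ∏ l ∈ S, thetaPair f w (b l)) ∈
      Submodule.span ℂ ((fun s w => ∏ l ∈ N.erase s, thetaPair f w (b l)) '' N) := by
  induction A using Multiset.induction_on generalizing S with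
  | empty =>
    obtain ⟨s, hs⟩ : ∃ s, N \ S = {s} :=
      card_eq_one.mp (by rw [card_sdiff_of_subset hS]; simp at hcard; omega)
    have hsN : s ∈ N := (mem_sdiff.mp (hs ▸ mem_singleton_self s)).1
    have hSs : S = N.erase s := by
      rw [← sdiff_singleton_eq_erase, ← hs, Finset.sdiff_sdiff_eq_self hS]
    exact Submodule.subset_span ⟨s, hsN, by simp [hSs]⟩
  | cons a A ih =>
    obtain ⟨p, hp, q, hq, hpq⟩ := one_lt_card.mp
      (by rw [card_sdiff_of_subset hS]; simp at hcard; omega : 1 < #(N \ S))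
    rw [mem_sdiff] at hp hq
    have hD := hb q hq.1 p hp.1 hpq.symm
    have hp' : Multiset.card A + #(insert p S) + 1 = #N := by
      rw [card_insert_of_notMem hp.2]; simp at hcard; omega
    have hq' : Multiset.card A + #(insert q S) + 1 = #N := by
      rw [card_insert_of_notMem hq.2]; simp at hcard; omega
    -- the Riemann relation expands `[w ± a]` in the two nodal factors `[w ± b p]`, `[w ± b q]`
    convert add_mem (Submodule.smul_mem _ (thetaPair f (b q) a / thetaPair f (b q) (b p))
      (ih (insert_subset hp.1 hS) hp')) (Submodule.smul_mem _
        (thetaPair f a (b p) / thetaPair f (b q) (b p)) (ih (insert_subset hq.1 hS) hq')) using 1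
    funext w
    simp only [Multiset.map_cons, Multiset.prod_cons, prod_insert hp.2, prod_insert hq.2,
      Pi.add_apply, Pi.smul_apply, smul_eq_mul]
    field_simp
    linear_combination (A.map (thetaPair f w)).prod * (∏ l ∈ S, thetaPair f w (b l)) *
      hR w (b q) a (b p)

end Interpolation

section NodalValues

variable {M s : ℕ}

theorem prod_erase_range_succ (hs : s ≤ M) (g : ℕ → ℂ) :
    ∏ l ∈ (range (M + 1)).erase s, g l
      = (∏ l ∈ range s, g l) * ∏ l ∈ range (M - s), g (s + 1 + l) := by
  rw [show M - s = M + 1 - (s + 1) by omega, ← prod_Ico_eq_prod_range g (s + 1) (M + 1),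
    ← prod_union (disjoint_left.mpr fun l h₁ h₂ => by simp at h₁ h₂; omega)]
  refine prod_congr (ext fun l => ?_) fun _ _ => rfl
  simp only [mem_erase, mem_range, mem_union, mem_Ico]
  omega

theorem prod_erase_shiftedFac_shift (a : ℂ) (hs : s ≤ M) :
    shiftedFac f δ a s * shiftedFac f δ (a + δ) M
      = shiftedFac f δ (a + δ) s * ∏ l ∈ (range (M + 1)).erase s, f (a + l * δ) := by
  obtain ⟨j, rfl⟩ := Nat.exists_eq_add_of_le hs
  rw [prod_erase_range_succ hs, shiftedFac_add, Nat.add_sub_cancel_left, mul_left_comm]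
  congr 2
  refine prod_congr rfl fun l _ => ?_
  push_cast
  ring_nf

theorem prod_erase_shiftedFac_double (a : ℂ) (hs : s ≤ M) :
    f (a + 2 * s * δ) * shiftedFac f δ a s * ∏ l ∈ (range (M + 1)).erase s, f (a + (s + l) * δ)
      = f a * shiftedFac f δ (a + (M + 1) * δ) s * shiftedFac f δ (a + δ) M := by
  obtain ⟨j, rfl⟩ := Nat.exists_eq_add_of_le hs
  have h₁ : f (a + 2 * s * δ) * shiftedFac f δ a s *
      ∏ l ∈ (range (s + j + 1)).erase s, f (a + (s + l) * δ)
        = shiftedFac f δ a (s + s + 1 + j) := by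
    rw [prod_erase_range_succ hs, shiftedFac_add, shiftedFac_add, shiftedFac_add,
      Nat.add_sub_cancel_left]
    simp only [shiftedFac, prod_range_one]
    push_cast
    ring_nf
  have h₂ : f a * shiftedFac f δ (a + (↑(s + j) + 1) * δ) s * shiftedFac f δ (a + δ) (s + j)
      = shiftedFac f δ a (1 + (s + j) + s) := by
    rw [shiftedFac_add a (1 + (s + j)) s, shiftedFac_add a 1 (s + j)]
    simp only [shiftedFac, prod_range_one]
    push_cast
    ring_nf
  rw [h₁, h₂]
  congr 1
  omega

theorem prod_erase_shiftedFac_neg (hodd : f.Odd) (hs : s ≤ M) :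
    shiftedFac f δ (-(M : ℂ) * δ) s * ∏ l ∈ (range (M + 1)).erase s, f ((s - l) * δ)
      = (-1) ^ M * shiftedFac f δ δ s * shiftedFac f δ δ M := by
  obtain ⟨j, rfl⟩ := Nat.exists_eq_add_of_le hs
  have h₁ : ∏ l ∈ range s, f ((s - l) * δ) = shiftedFac f δ δ s := by
    rw [shiftedFac, ← prod_range_reflect]
    refine prod_congr rfl fun l hl => ?_
    rw [Nat.sub_sub, Nat.cast_sub (by rw [mem_range] at hl; omega)]
    push_cast
    ring_nf
  have h₂ : ∏ l ∈ range j, f ((s - (s + 1 + l : ℕ)) * δ) = (-1) ^ j * shiftedFac f δ δ j := by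
    rw [shiftedFac, ← card_range j, ← prod_const, card_range, ← prod_mul_distrib]
    refine prod_congr rfl fun l _ => ?_
    rw [show ((s : ℂ) - (s + 1 + l : ℕ)) * δ = -(δ + l * δ) by push_cast; ring, hodd.eq,
      neg_one_mul]
  have h₃ : shiftedFac f δ (-(↑(s + j) : ℂ) * δ) s = (-1) ^ s * shiftedFac f δ (δ + j * δ) s := by
    rw [← shiftedFac_reflect hodd]
    congr 1
    push_cast
    ring
  rw [prod_erase_range_succ hs, Nat.add_sub_cancel_left, h₁, h₂, h₃, add_comm s j,
    shiftedFac_add δ j s, pow_add]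
  ring

theorem prod_erase_thetaPair_node (u : ℂ) :
    ∏ l ∈ (range (M + 1)).erase s, thetaPair f (u + s * δ) (u + l * δ)
      = (∏ l ∈ (range (M + 1)).erase s, f (2 * u + (s + l) * δ)) *
          ∏ l ∈ (range (M + 1)).erase s, f ((s - l) * δ) := by
  rw [← prod_mul_distrib]
  refine prod_congr rfl fun l _ => ?_
  rw [thetaPair]
  ring_nf

theorem prod_erase_thetaPair_eq (hodd : f.Odd) (hs : s ≤ M) (u v : ℂ) :
    ∏ l ∈ (range (M + 1)).erase s, thetaPair f v (u + l * δ)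
      = (-1) ^ M * (∏ l ∈ (range (M + 1)).erase s, f (u + v + l * δ)) *
          ∏ l ∈ (range (M + 1)).erase s, f (u - v + l * δ) := by
  have hcard : #((range (M + 1)).erase s) = M := by
    rw [card_erase_of_mem (mem_range.mpr (by omega)), card_range, Nat.add_sub_cancel]
  rw [← hcard, ← prod_const, hcard, mul_assoc, ← prod_mul_distrib, ← prod_mul_distrib]
  refine prod_congr rfl fun l _ => ?_
  rw [thetaPair, show v - (u + l * δ) = -(u - v + l * δ) by ring, hodd.eq]
  ring_nf

theorem Vterm_mul_prod_erase_thetaPair (hodd : f.Odd) (u v : ℂ) (hs : s ≤ M)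
    (h2u : f (2 * u) ≠ 0) (hδ : shiftedFac f δ δ M ≠ 0)
    (hv₁ : shiftedFac f δ (u + v + δ) M ≠ 0) (hv₂ : shiftedFac f δ (u - v + δ) M ≠ 0)
    (hM : shiftedFac f δ (2 * u + (M + 1) * δ) M ≠ 0) :
    Vterm f δ (2 * u) ![u + v, u - v, -(M : ℂ) * δ] s *
        ∏ l ∈ (range (M + 1)).erase s, thetaPair f (u + s * δ) (u + l * δ)
      = shiftedFac f δ (2 * u + δ) M * shiftedFac f δ δ M /
          (shiftedFac f δ (u + v + δ) M * shiftedFac f δ (u - v + δ) M) *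
        ∏ l ∈ (range (M + 1)).erase s, thetaPair f v (u + l * δ) := by
  have hdouble := prod_erase_shiftedFac_double (f := f) (δ := δ) (2 * u) hs
  have hneg := prod_erase_shiftedFac_neg (f := f) (δ := δ) hodd hs
  have hplus := prod_erase_shiftedFac_shift (f := f) (δ := δ) (u + v) hs
  have hminus := prod_erase_shiftedFac_shift (f := f) (δ := δ) (u - v) hs
  have key : f (2 * u + 2 * s * δ) * shiftedFac f δ (2 * u) s * shiftedFac f δ (u + v) s *
        shiftedFac f δ (u - v) s * shiftedFac f δ (-(M : ℂ) * δ) s *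
        (∏ l ∈ (range (M + 1)).erase s, thetaPair f (u + s * δ) (u + l * δ)) *
        (shiftedFac f δ (u + v + δ) M * shiftedFac f δ (u - v + δ) M)
      = f (2 * u) * shiftedFac f δ δ s * shiftedFac f δ (u + v + δ) s *
          shiftedFac f δ (u - v + δ) s * shiftedFac f δ (2 * u + (M + 1) * δ) s *
          (shiftedFac f δ (2 * u + δ) M * shiftedFac f δ δ M) *
          ∏ l ∈ (range (M + 1)).erase s, thetaPair f v (u + l * δ) := by
    rw [prod_erase_thetaPair_node, prod_erase_thetaPair_eq hodd hs]
    calc _ = (f (2 * u + 2 * s * δ) * shiftedFac f δ (2 * u) s *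
            ∏ l ∈ (range (M + 1)).erase s, f (2 * u + (s + l) * δ)) *
          (shiftedFac f δ (-(M : ℂ) * δ) s * ∏ l ∈ (range (M + 1)).erase s, f ((s - l) * δ)) *
          (shiftedFac f δ (u + v) s * shiftedFac f δ (u + v + δ) M) *
          (shiftedFac f δ (u - v) s * shiftedFac f δ (u - v + δ) M) := by ring
      _ = _ := by rw [hdouble, hneg, hplus, hminus]; ring
  have hVterm : Vterm f δ (2 * u) ![u + v, u - v, -(M : ℂ) * δ] s
      = f (2 * u + 2 * s * δ) * shiftedFac f δ (2 * u) s * shiftedFac f δ (u + v) s *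
          shiftedFac f δ (u - v) s * shiftedFac f δ (-(M : ℂ) * δ) s /
        (f (2 * u) * shiftedFac f δ δ s * shiftedFac f δ (u + v + δ) s *
          shiftedFac f δ (u - v + δ) s * shiftedFac f δ (2 * u + (M + 1) * δ) s) := by
    simp only [Vterm, Fin.prod_univ_three, Matrix.cons_val_zero, Matrix.cons_val_one,
      Matrix.cons_val_two, Matrix.head_cons, Matrix.tail_cons]
    rw [show δ + 2 * u - (u + v) = u - v + δ by ring, show δ + 2 * u - (u - v) = u + v + δ by ring,
      show δ + 2 * u - -(M : ℂ) * δ = 2 * u + (M + 1) * δ by ring]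
    ring
  have hs' : ∀ {a : ℂ}, shiftedFac f δ a M ≠ 0 → shiftedFac f δ a s ≠ 0 :=
    fun h => shiftedFac_ne_zero_of_le h hs
  rw [hVterm, div_mul_eq_mul_div, div_mul_eq_mul_div, div_eq_div_iff
    (by simp only [ne_eq, mul_eq_zero, not_or]; exact ⟨⟨⟨⟨h2u, hs' hδ⟩, hs' hv₁⟩, hs' hv₂⟩, hs' hM⟩)
    (mul_ne_zero hv₁ hv₂)]
  linear_combination key

theorem thetaPair_node_ne_zero (hodd : f.Odd) {u : ℂ}
    (hgen : ∀ j ≤ 2 * M, f (2 * u + j * δ) ≠ 0) (hδ : shiftedFac f δ δ M ≠ 0) {p q : ℕ}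
    (hp : p ≤ M) (hq : q ≤ M) (hpq : p ≠ q) : thetaPair f (u + p * δ) (u + q * δ) ≠ 0 := by
  wlog hqp : q < p generalizing p q
  · rw [thetaPair_swap hodd, neg_ne_zero]
    exact this hq hp hpq.symm (by omega)
  rw [thetaPair]
  refine mul_ne_zero ?_ ?_
  · convert hgen (p + q) (by omega) using 2
    push_cast
    ring
  · convert prod_ne_zero_iff.mp hδ (p - q - 1) (mem_range.mpr (by omega)) using 2
    rw [Nat.sub_sub, Nat.cast_sub (by omega)]
    push_cast
    ring

theorem sum_Vterm_mul_prod_thetaPair (hodd : f.Odd) (hR : RiemannRelation f) {u v : ℂ}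
    (hgen : ∀ j ≤ 2 * M, f (2 * u + j * δ) ≠ 0) (hδ : shiftedFac f δ δ M ≠ 0)
    (hv₁ : shiftedFac f δ (u + v + δ) M ≠ 0) (hv₂ : shiftedFac f δ (u - v + δ) M ≠ 0)
    (A : Multiset ℂ) (hA : Multiset.card A = M) :
    ∑ k ∈ range (M + 1), Vterm f δ (2 * u) ![u + v, u - v, -(M : ℂ) * δ] k *
        (A.map (thetaPair f (u + k * δ))).prod
      = shiftedFac f δ (2 * u + δ) M * shiftedFac f δ δ M /
          (shiftedFac f δ (u + v + δ) M * shiftedFac f δ (u - v + δ) M) *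
        (A.map (thetaPair f v)).prod := by
  set c := Vterm f δ (2 * u) ![u + v, u - v, -(M : ℂ) * δ]
  set K := shiftedFac f δ (2 * u + δ) M * shiftedFac f δ δ M /
    (shiftedFac f δ (u + v + δ) M * shiftedFac f δ (u - v + δ) M)
  have hnodes : ∀ p ∈ range (M + 1), ∀ q ∈ range (M + 1), p ≠ q →
      thetaPair f (u + p * δ) (u + q * δ) ≠ 0 := fun p hp q hq =>
    thetaPair_node_ne_zero hodd hgen hδ (by simpa [Nat.lt_succ_iff] using hp)
      (by simpa [Nat.lt_succ_iff] using hq)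
  let Φ : (ℂ → ℂ) →ₗ[ℂ] ℂ :=
    ∑ k ∈ range (M + 1), c k • LinearMap.proj (u + k * δ) - K • LinearMap.proj v
  have hΦ : ∀ F, Φ F = ∑ k ∈ range (M + 1), c k * F (u + k * δ) - K * F v := by
    intro F; simp [Φ]
  have hspan := prod_thetaPair_mem_span hR hnodes A (empty_subset _) (by simp [hA])
  suffices hker : Submodule.span ℂ ((fun s w => ∏ l ∈ (range (M + 1)).erase s,
      thetaPair f w (u + l * δ)) '' (range (M + 1) : Set ℕ)) ≤ LinearMap.ker Φ by
    have := hker hspan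
    rw [LinearMap.mem_ker, hΦ] at this
    simpa [sub_eq_zero] using this
  rw [Submodule.span_le]
  rintro _ ⟨s, hs, rfl⟩
  rw [SetLike.mem_coe, LinearMap.mem_ker, hΦ, sub_eq_zero, sum_eq_single s]
  · have h2u : f (2 * u) ≠ 0 := by simpa using hgen 0 (Nat.zero_le _)
    have hM : shiftedFac f δ (2 * u + (M + 1) * δ) M ≠ 0 := prod_ne_zero_iff.mpr fun r hr => by
      convert hgen (M + 1 + r) (by rw [mem_range] at hr; omega) using 2; push_cast; ring
    exact Vterm_mul_prod_erase_thetaPair hodd u v (by simpa [Nat.lt_succ_iff] using hs)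
      h2u hδ hv₁ hv₂ hM
  · intro k hk hks
    refine mul_eq_zero_of_right _ (prod_eq_zero (mem_erase.mpr ⟨hks, hk⟩) ?_)
    rw [thetaPair, sub_self, hodd.map_zero, mul_zero]
  · exact fun h => absurd hs h

end NodalValues

theorem div_mul_div_shiftedFac_eq_div_prod_thetaPair (u c : ℂ) {n k M : ℕ} (hn : n ≤ M)
    (hk : k ≤ M) (h₁ : shiftedFac f δ (u + c) M ≠ 0)
    (h₂ : shiftedFac f δ (u - c - n * δ + δ) M ≠ 0) :
    shiftedFac f δ (u + c + n * δ) k / shiftedFac f δ (u - c - n * δ + δ) k *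
        (shiftedFac f δ (u - c + δ) k / shiftedFac f δ (u + c) k)
      = (∏ r ∈ range n, thetaPair f (u + k * δ) (c + r * δ)) /
          ∏ r ∈ range n, thetaPair f u (c + r * δ) := by
  rw [prod_range_thetaPair, prod_range_thetaPair, div_mul_div_comm,
    div_eq_div_iff (mul_ne_zero (shiftedFac_ne_zero_of_le h₂ hk) (shiftedFac_ne_zero_of_le h₁ hk))
      (mul_ne_zero (shiftedFac_ne_zero_of_le h₁ hn) (shiftedFac_ne_zero_of_le h₂ hn))]
  have e₁ := shiftedFac_add_mul_comm (f := f) (δ := δ) (u + c) n k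
  have e₂ := shiftedFac_add_mul_comm (f := f) (δ := δ) (u - c - n * δ + δ) n k
  rw [show u - c - n * δ + δ + n * δ = u - c + δ by ring] at e₂
  rw [show u + k * δ + c = u + c + k * δ by ring,
    show u + k * δ - c - n * δ + δ = u - c - n * δ + δ + k * δ by ring]
  linear_combination shiftedFac f δ (u - c + δ) k * shiftedFac f δ (u - c - n * δ + δ) n * e₁ +
    shiftedFac f δ (u + c + k * δ) n * shiftedFac f δ (u + c) k * e₂

theorem shiftedFac_ne_zero_of_KMargs {u v : ℂ} {m M : ℕ} {x : Fin m → ℂ} {α : Fin m → ℕ}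
    (hden : ∀ i, shiftedFac f δ (δ + 2 * u - KMargs δ u v x α M i) M ≠ 0) (i : Fin m) :
    shiftedFac f δ (u + (x i + δ / 2)) M ≠ 0 ∧
      shiftedFac f δ (u - (x i + δ / 2) - α i * δ + δ) M ≠ 0 := by
  have h₁ := hden (.inr (.inl (i, 1)))
  have h₂ := hden (.inr (.inl (i, 0)))
  simp only [KMargs, Sum.elim_inr, Sum.elim_inl, Fin.isValue, if_pos, one_ne_zero,
    if_false] at h₁ h₂
  rw [show δ + 2 * u - (u + δ / 2 - x i) = u + (x i + δ / 2) by ring] at h₁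
  rw [show δ + 2 * u - (u + δ / 2 + x i + α i * δ) = u - (x i + δ / 2) - α i * δ + δ by ring]
    at h₂
  exact ⟨h₁, h₂⟩

theorem Vterm_KMargs (u v : ℂ) {m M : ℕ} (x : Fin m → ℂ) (α : Fin m → ℕ) (hα : ∀ i, α i ≤ M)
    (hden : ∀ i, shiftedFac f δ (δ + 2 * u - KMargs δ u v x α M i) M ≠ 0) {k : ℕ} (hk : k ≤ M) :
    Vterm f δ (2 * u) (KMargs δ u v x α M) k
      = Vterm f δ (2 * u) ![u + v, u - v, -(M : ℂ) * δ] k *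
        ∏ i, (∏ r ∈ range (α i), thetaPair f (u + k * δ) (x i + δ / 2 + r * δ)) /
          ∏ r ∈ range (α i), thetaPair f u (x i + δ / 2 + r * δ) := by
  have hpair : ∀ i, shiftedFac f δ (u + δ / 2 + x i + α i * δ) k /
        shiftedFac f δ (δ + 2 * u - (u + δ / 2 + x i + α i * δ)) k *
        (shiftedFac f δ (u + δ / 2 - x i) k / shiftedFac f δ (δ + 2 * u - (u + δ / 2 - x i)) k)
      = (∏ r ∈ range (α i), thetaPair f (u + k * δ) (x i + δ / 2 + r * δ)) /
          ∏ r ∈ range (α i), thetaPair f u (x i + δ / 2 + r * δ) := by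
    intro i
    rw [show δ + 2 * u - (u + δ / 2 - x i) = u + (x i + δ / 2) by ring,
      show δ + 2 * u - (u + δ / 2 + x i + α i * δ) = u - (x i + δ / 2) - α i * δ + δ by ring,
      show u + δ / 2 + x i + α i * δ = u + (x i + δ / 2) + α i * δ by ring,
      show u + δ / 2 - x i = u - (x i + δ / 2) + δ by ring]
    exact div_mul_div_shiftedFac_eq_div_prod_thetaPair u _ (hα i) hk
      (shiftedFac_ne_zero_of_KMargs hden i).1 (shiftedFac_ne_zero_of_KMargs hden i).2
  simp only [Vterm, Fintype.prod_sum_type, Fintype.prod_prod_type, Fin.prod_univ_two,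
    Fin.prod_univ_three, Fin.prod_univ_one, KMargs, Sum.elim_inl, Sum.elim_inr,
    Matrix.cons_val_zero, Matrix.cons_val_one, Matrix.cons_val_two, Matrix.head_cons,
    Matrix.tail_cons, Fin.isValue, if_pos, one_ne_zero, if_false, hpair]
  ring

theorem karlsson_minton_summation_generic (hodd : f.Odd) (hR : RiemannRelation f) {m M : ℕ}
    (x : Fin m → ℂ) (α : Fin m → ℕ) (hM : ∑ i, α i = M) (u v : ℂ)
    (hgen : ∀ j ≤ 2 * M, f (2 * u + j * δ) ≠ 0) (hδ : shiftedFac f δ δ M ≠ 0)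
    (hden : ∀ i, shiftedFac f δ (δ + 2 * u - KMargs δ u v x α M i) M ≠ 0) :
    Vseries f δ M (2 * u) (KMargs δ u v x α M) =
      shiftedFac f δ (u + δ + u) M * shiftedFac f δ (u + δ - u) M /
          (shiftedFac f δ (u + δ + v) M * shiftedFac f δ (u + δ - v) M) *
        ∏ i, shiftedFac f δ (x i + δ / 2 + v) (α i) *
            shiftedFac f δ (x i + δ / 2 - v) (α i) /
          (shiftedFac f δ (x i + δ / 2 + u) (α i) *
            shiftedFac f δ (x i + δ / 2 - u) (α i)) := by
  have hα : ∀ i, α i ≤ M := fun i => hM ▸ single_le_sum (fun _ _ => Nat.zero_le _) (mem_univ i)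
  let A : Multiset ℂ := (univ.sigma fun i => range (α i)).val.map fun p => x p.1 + δ / 2 + p.2 * δ
  have hA : Multiset.card A = M := by simp [A, hM]
  have hPA : ∀ w, (A.map (thetaPair f w)).prod
      = ∏ i, ∏ r ∈ range (α i), thetaPair f w (x i + δ / 2 + r * δ) := fun w => by
    simp only [A, Multiset.map_map, Function.comp_def, prod_map_val, prod_sigma]
  have hv₁ : shiftedFac f δ (u + v + δ) M ≠ 0 := by
    simpa [KMargs, show δ + 2 * u - (u - v) = u + v + δ by ring] using hden (.inl 1)
  have hv₂ : shiftedFac f δ (u - v + δ) M ≠ 0 := by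
    simpa [KMargs, show δ + 2 * u - (u + v) = u - v + δ by ring] using hden (.inl 0)
  have hrhs : ∀ i, shiftedFac f δ (x i + δ / 2 + v) (α i) * shiftedFac f δ (x i + δ / 2 - v) (α i) /
        (shiftedFac f δ (x i + δ / 2 + u) (α i) * shiftedFac f δ (x i + δ / 2 - u) (α i))
      = (∏ r ∈ range (α i), thetaPair f v (x i + δ / 2 + r * δ)) /
          ∏ r ∈ range (α i), thetaPair f u (x i + δ / 2 + r * δ) := fun i => by
    rw [shiftedFac_add_mul_shiftedFac_sub hodd, shiftedFac_add_mul_shiftedFac_sub hodd,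
      mul_div_mul_left _ _ (pow_ne_zero _ (neg_ne_zero.mpr one_ne_zero))]
  rw [Vseries_eq_sum_Vterm, prod_congr rfl fun i _ => hrhs i, prod_div_distrib, ← hPA, ← hPA,
    show u + δ + u = 2 * u + δ by ring, show u + δ - u = δ by ring,
    show u + δ + v = u + v + δ by ring, show u + δ - v = u - v + δ by ring, mul_div_assoc',
    ← sum_Vterm_mul_prod_thetaPair hodd hR hgen hδ hv₁ hv₂ A hA, sum_div]
  refine sum_congr rfl fun k hk => ?_
  rw [Vterm_KMargs u v x α hα hden (by rw [mem_range] at hk; omega), prod_div_distrib,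
    hPA, hPA, mul_div_assoc]

end KarlssonMinton

section Continuity

open Filter Topology

variable {f : ℂ → ℂ} {δ : ℂ}

@[fun_prop]
theorem Continuous.shiftedFac {X : Type*} [TopologicalSpace X] (hf : Continuous f) {g : X → ℂ}
    (hg : Continuous g) (k : ℕ) : Continuous fun t => shiftedFac f δ (g t) k :=
  continuous_finsetProd _ fun _ _ => hf.comp (hg.add continuous_const)

theorem continuous_KMargs (v : ℂ) {m : ℕ} (x : Fin m → ℂ) (α : Fin m → ℕ) (M : ℕ)
    (i : Fin 2 ⊕ (Fin m × Fin 2) ⊕ Fin 1) :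
    Continuous fun u => KMargs δ u v x α M i := by
  rcases i with a | ⟨i, b⟩ | c
  · fin_cases a <;> simp [KMargs] <;> fun_prop
  · by_cases hb : b = 0 <;> simp only [KMargs, Sum.elim_inr, Sum.elim_inl, hb, if_true,
      if_false] <;> fun_prop
  · exact continuous_const

theorem continuousAt_Vseries {ι : Type*} [Fintype ι] (hf : Continuous f) {K : ℕ} {g : ℂ → ℂ}
    {a : ℂ → ι → ℂ} (hg : Continuous g) (ha : ∀ i, Continuous fun t => a t i) {t₀ : ℂ}
    (h₀ : f (g t₀) ≠ 0) (hden : ∀ i, ∀ k ≤ K, shiftedFac f δ (δ + g t₀ - a t₀ i) k ≠ 0) :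
    ContinuousAt (fun t => Vseries f δ K (g t) (a t)) t₀ := by
  unfold Vseries
  refine tendsto_finsetSum _ fun k hk => ?_
  have hkK : k ≤ K := by rw [mem_range] at hk; omega
  have hlead : ContinuousAt (fun t => f (g t + 2 * k * δ) / f (g t)) t₀ :=
    ContinuousAt.div (by fun_prop) (by fun_prop) h₀
  have hbase : ContinuousAt (fun t => shiftedFac f δ (g t) k / shiftedFac f δ δ k) t₀ := by
    fun_prop
  have hratio : ContinuousAt
      (fun t => ∏ i, shiftedFac f δ (a t i) k / shiftedFac f δ (δ + g t - a t i) k) t₀ :=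
    tendsto_finsetProd _ fun i _ => ContinuousAt.div (by fun_prop) (by fun_prop) (hden i k hkK)
  exact (hlead.mul hbase).mul hratio

theorem ContinuousAt.eq_of_eventuallyEq_nhdsNE {X Y : Type*} [TopologicalSpace X]
    [TopologicalSpace Y] [T2Space Y] {f g : X → Y} {x : X} [(𝓝[≠] x).NeBot]
    (hf : ContinuousAt f x) (hg : ContinuousAt g x) (h : f =ᶠ[𝓝[≠] x] g) : f x = g x :=
  ((hf.eventuallyEq_nhds_iff_eventuallyEq_nhdsNE hg).mp h).eq_of_nhds

theorem Differentiable.eventually_ne_zero {g : ℂ → ℂ} (hg : Differentiable ℂ g) (hne : g ≠ 0)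
    (z : ℂ) : ∀ᶠ w in 𝓝[≠] z, g w ≠ 0 := by
  refine ((hg.analyticAt z).eventually_eq_zero_or_eventually_ne_zero).resolve_left fun h => hne ?_
  funext w
  exact AnalyticOnNhd.eqOn_zero_of_preconnected_of_eventuallyEq_zero
    (fun w _ => hg.analyticAt w) isPreconnected_univ (Set.mem_univ z) h (Set.mem_univ w)

end Continuity

open KarlssonMinton Filter Topology in
theorem karlsson_minton_summation_general (f : ℂ → ℂ)
    (hne : f ≠ 0) (hent : Differentiable ℂ f)
    (hodd : ∀ u : ℂ, f (-u) = -f u)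
    (hR : ∀ x y u v : ℂ,
      f (x + u) * f (x - u) * (f (y + v) * f (y - v)) -
        f (x + v) * f (x - v) * (f (y + u) * f (y - u)) =
      f (x + y) * f (x - y) * (f (u + v) * f (u - v)))
    (δ : ℂ) (m M : ℕ)
    (x : Fin m → ℂ) (α : Fin m → ℕ) (hM : ∑ i, α i = M)
    (u v : ℂ)
    (hu0 : f (2 * u) ≠ 0)
    (hδk : ∀ k : ℕ, k ≤ M → shiftedFac f δ δ k ≠ 0)
    (hden : ∀ (i : Fin 2 ⊕ (Fin m × Fin 2) ⊕ Fin 1) (k : ℕ), k ≤ M →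
      shiftedFac f δ (δ + 2 * u - KMargs δ u v x α M i) k ≠ 0)
    (hduv1 : shiftedFac f δ (u + δ + v) M ≠ 0)
    (hduv2 : shiftedFac f δ (u + δ - v) M ≠ 0)
    (hdxu : ∀ i : Fin m, shiftedFac f δ (x i + δ / 2 + u) (α i) ≠ 0 ∧
      shiftedFac f δ (x i + δ / 2 - u) (α i) ≠ 0) :
    Vseries f δ M (2 * u) (KMargs δ u v x α M) =
      shiftedFac f δ (u + δ + u) M * shiftedFac f δ (u + δ - u) M /
          (shiftedFac f δ (u + δ + v) M * shiftedFac f δ (u + δ - v) M) *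
        ∏ i, shiftedFac f δ (x i + δ / 2 + v) (α i) *
            shiftedFac f δ (x i + δ / 2 - v) (α i) /
          (shiftedFac f δ (x i + δ / 2 + u) (α i) *
            shiftedFac f δ (x i + δ / 2 - u) (α i)) := by
  have hf : Continuous f := hent.continuous
  have hKM := continuous_KMargs (δ := δ) v x α M
  refine ContinuousAt.eq_of_eventuallyEq_nhdsNE
    (f := fun t => Vseries f δ M (2 * t) (KMargs δ t v x α M))
    (g := fun t => shiftedFac f δ (t + δ + t) M * shiftedFac f δ (t + δ - t) M /
      (shiftedFac f δ (t + δ + v) M * shiftedFac f δ (t + δ - v) M) *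
        ∏ i, shiftedFac f δ (x i + δ / 2 + v) (α i) * shiftedFac f δ (x i + δ / 2 - v) (α i) /
          (shiftedFac f δ (x i + δ / 2 + t) (α i) * shiftedFac f δ (x i + δ / 2 - t) (α i)))
    ?_ ?_ ?_
  · exact continuousAt_Vseries hf (by fun_prop) hKM hu0 hden
  · refine ContinuousAt.mul (by fun_prop (disch := exact mul_ne_zero hduv1 hduv2))
      (tendsto_finsetProd _ fun i _ =>
        continuousAt_const.div (by fun_prop) (mul_ne_zero (hdxu i).1 (hdxu i).2))
  · have hgen : ∀ᶠ t in 𝓝[≠] u, ∀ j ≤ 2 * M, f (2 * t + j * δ) ≠ 0 :=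
      (Set.finite_le_nat _).eventually_all.mpr fun j _ =>
        (hent.comp (by fun_prop)).eventually_ne_zero (fun h => hne (funext fun z => by
          rw [show z = 2 * ((z - j * δ) / 2) + j * δ by ring]; exact congr_fun h _)) u
    have hden' : ∀ᶠ t in 𝓝 u, ∀ i, shiftedFac f δ (δ + 2 * t - KMargs δ t v x α M i) M ≠ 0 :=
      eventually_all.mpr fun i => ((hf.shiftedFac (by fun_prop) M).continuousAt).eventually_ne
        (hden i M le_rfl)
    filter_upwards [hgen, nhdsWithin_le_nhds hden'] with t ht₁ ht₂
    exact karlsson_minton_summation_generic hodd hR x α hM t v ht₁ (hδk M le_rfl) ht₂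

/-- Elliptic Karlsson–Minton type summation (Rosengren–Schlosser):
`_{2m+8}V_{2m+7}(2u; u+v, u-v, (u+δ/2+x_i+α_iδ, u+δ/2-x_i)_i, -Mδ)
 = ([u+δ+u]_M [u+δ-u]_M / ([u+δ+v]_M [u+δ-v]_M))
   ∏_i ([x_i+δ/2±v]_{α_i} / [x_i+δ/2±u]_{α_i})`. -/
theorem karlsson_minton_summation (f : ℂ → ℂ)
    (hne : f ≠ 0) (hent : Differentiable ℂ f)
    (hodd : ∀ u : ℂ, f (-u) = -f u)
    (hR : ∀ x y u v : ℂ,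
      f (x + u) * f (x - u) * (f (y + v) * f (y - v)) -
        f (x + v) * f (x - v) * (f (y + u) * f (y - u)) =
      f (x + y) * f (x - y) * (f (u + v) * f (u - v)))
    (δ : ℂ) (hδ : δ ≠ 0) (m M : ℕ)
    (x : Fin m → ℂ) (α : Fin m → ℕ) (hM : ∑ i, α i = M)
    (u v : ℂ)
    (hu0 : f (2 * u) ≠ 0)
    (hδk : ∀ k : ℕ, k ≤ M → shiftedFac f δ δ k ≠ 0)
    (hden : ∀ (i : Fin 2 ⊕ (Fin m × Fin 2) ⊕ Fin 1) (k : ℕ), k ≤ M →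
      shiftedFac f δ (δ + 2 * u - KMargs δ u v x α M i) k ≠ 0)
    (hduv1 : shiftedFac f δ (u + δ + v) M ≠ 0)
    (hduv2 : shiftedFac f δ (u + δ - v) M ≠ 0)
    (hdxu : ∀ i : Fin m, shiftedFac f δ (x i + δ / 2 + u) (α i) ≠ 0 ∧
      shiftedFac f δ (x i + δ / 2 - u) (α i) ≠ 0) :
    Vseries f δ M (2 * u) (KMargs δ u v x α M) =
      shiftedFac f δ (u + δ + u) M * shiftedFac f δ (u + δ - u) M /
          (shiftedFac f δ (u + δ + v) M * shiftedFac f δ (u + δ - v) M) *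
        ∏ i, shiftedFac f δ (x i + δ / 2 + v) (α i) *
            shiftedFac f δ (x i + δ / 2 - v) (α i) /
          (shiftedFac f δ (x i + δ / 2 + u) (α i) *
            shiftedFac f δ (x i + δ / 2 - u) (α i)) :=
  karlsson_minton_summation_general f hne hent hodd hR δ m M x α hM u v hu0 hδk hden hduv1 hduv2
    hdxu
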